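/- arXiv:0803.2639 — 6 statements merged into one kernel-verified Lean document; each statement's English description precedes it below -/
import Mathlib

section
/- The Hurwitz-type ring 𝓗 = ρ𝒢 ⊕ ρξ𝒢 ⊕ j𝒢 ⊕ jξ𝒢, where ρ = (1+i+j+k)/2, ξ = e^{πi/4}, and 𝒢 = ℤ[i], is closed under multiplication, i.e. it is a subring of the quaternion algebra H = Q(ξ) ⊕ jQ(ξ). -/
/-!
Write `𝓗 = ρ𝒢 + ρξ𝒢 + j𝒢 + jξ𝒢`. Since `ξ` commutes with `𝒢` and `ξ² = i`, the additive group
`𝓗` is stable under right multiplication by `𝒢` and by `ξ`, so left multiplication by `s` maps `𝓗`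
into itself as soon as `sρ, sj ∈ 𝓗`. The elements `s` with `s𝓗 ⊆ 𝓗` form a subring, and it contains
`ρ`, `j`, `ξ` because `ρ² = ρ - 1`, `ρj = -ρ + j(1 - i)`, `jρ = ρi`, `j² = -1`, `ξρ = ρξ - jξ` and
`ξj = -jξi`. These three elements generate a ring containing `𝓗`, and `1 = ρ(1 - i) + ji ∈ 𝓗`, so
`𝓗` is closed under multiplication.
-/

open Quaternion Complex

/-- The embedding of `ℂ` into the Hamiltonian quaternions via the imaginary unit `i`. -/
noncomputable def toQ (z : ℂ) : Quaternion ℝ := ⟨z.re, z.im, 0, 0⟩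

/-- The quaternion unit `j`. -/
def jj : Quaternion ℝ := ⟨0, 0, 1, 0⟩

/-- `ξ = e^{πi/4}` as a quaternion. -/
noncomputable def xiQ : Quaternion ℝ := toQ (Complex.exp (Real.pi * Complex.I / 4))

/-- A Gaussian integer `a + bi` viewed as a quaternion. -/
def Gq (a b : ℤ) : Quaternion ℝ := ⟨(a : ℝ), (b : ℝ), 0, 0⟩

/-- `ρ = (1 + i + j + k)/2`. -/
noncomputable def rhoQ : Quaternion ℝ := ⟨1/2, 1/2, 1/2, 1/2⟩

/-- The Hurwitz-type ring `𝓗 = ρ𝒢 ⊕ ρξ𝒢 ⊕ j𝒢 ⊕ jξ𝒢`, as the right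
`ℤ[i]`-module generated by `{ρ, ρξ, j, jξ}`. -/
noncomputable def HurSet : Set (Quaternion ℝ) :=
  {q | ∃ a₁ b₁ a₂ b₂ a₃ b₃ a₄ b₄ : ℤ,
    q = rhoQ * Gq a₁ b₁ + rhoQ * xiQ * Gq a₂ b₂ + jj * Gq a₃ b₃ + jj * xiQ * Gq a₄ b₄}

namespace AddSubgroup

variable {A : Type*} [Ring A]

def leftMulStabilizer (M : AddSubgroup A) : Subring A where
  carrier := {x | ∀ m ∈ M, x * m ∈ M}
  mul_mem' {x y} hx hy m hm := by
    change x * y * m ∈ M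
    rw [mul_assoc]; exact hx _ (hy m hm)
  one_mem' m hm := by rwa [one_mul]
  add_mem' {x y} hx hy m hm := by
    change (x + y) * m ∈ M
    rw [add_mul]; exact M.add_mem (hx m hm) (hy m hm)
  zero_mem' m _ := by rw [zero_mul]; exact M.zero_mem
  neg_mem' hx m hm := by rw [neg_mul]; exact M.neg_mem (hx m hm)

theorem exists_subring_coe_eq (M : AddSubgroup A) {S : Set A} (one_mem : (1 : A) ∈ M)
    (hS : S ⊆ M.leftMulStabilizer) (hM : (M : Set A) ⊆ Subring.closure S) :
    ∃ T : Subring A, (T : Set A) = M :=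
  ⟨{ M with
      one_mem' := one_mem
      mul_mem' := fun hx hy => Subring.closure_le.2 hS (hM hx) _ hy }, rfl⟩

end AddSubgroup

noncomputable def gaussianToQuaternion : GaussianInt →+* ℍ :=
  (ofComplex : ℂ →+* ℍ).comp GaussianInt.toComplex

local notation "φ" => gaussianToQuaternion

theorem gaussianToQuaternion_apply (z : GaussianInt) : φ z = ⟨z.re, z.im, 0, 0⟩ := by
  ext <;> simp [gaussianToQuaternion]

theorem Gq_eq_gaussianToQuaternion (a b : ℤ) : Gq a b = φ ⟨a, b⟩ := by
  rw [gaussianToQuaternion_apply]; rfl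

theorem xiQ_eq_ofComplex : xiQ = ofComplex (exp (Real.pi * I / 4)) := rfl

theorem commute_xiQ (z : GaussianInt) : Commute xiQ (φ z) :=
  (Commute.all (exp (Real.pi * I / 4)) (GaussianInt.toComplex z)).map ofComplex

theorem xiQ_mul_self : xiQ * xiQ = φ ⟨0, 1⟩ := by
  have h : exp (Real.pi * I / 4) * exp (Real.pi * I / 4) = I := by
    rw [← Complex.exp_add]
    convert exp_pi_div_two_mul_I using 2
    ring
  have hI : GaussianInt.toComplex ⟨0, 1⟩ = I := by simp [GaussianInt.toComplex_def]
  rw [xiQ_eq_ofComplex, ← map_mul, h, ← hI]; rfl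

theorem gaussianToQuaternion_mem_closure_xiQ (z : GaussianInt) : φ z ∈ Subring.closure {xiQ} := by
  obtain ⟨a, b⟩ := z
  rw [Zsqrtd.decompose, map_add, map_mul, map_intCast, map_intCast]
  have hξ : xiQ ∈ Subring.closure {xiQ} := Subring.subset_closure rfl
  exact add_mem (intCast_mem _ a)
    (mul_mem (xiQ_mul_self ▸ mul_mem hξ hξ) (intCast_mem _ b))

theorem xiQ_eq : xiQ = ⟨√2 / 2, √2 / 2, 0, 0⟩ := by
  have h : (Real.pi : ℂ) * I / 4 = ((Real.pi / 4 : ℝ) : ℂ) * I := by push_cast; ring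
  rw [xiQ, toQ, h, exp_ofReal_mul_I_re, exp_ofReal_mul_I_im, Real.cos_pi_div_four,
    Real.sin_pi_div_four]

noncomputable def hurwitz : AddSubgroup ℍ where
  carrier := {q | ∃ z₁ z₂ z₃ z₄ : GaussianInt,
    q = rhoQ * φ z₁ + rhoQ * xiQ * φ z₂ + jj * φ z₃ + jj * xiQ * φ z₄}
  zero_mem' := ⟨0, 0, 0, 0, by simp⟩
  add_mem' := by
    rintro _ _ ⟨z₁, z₂, z₃, z₄, rfl⟩ ⟨w₁, w₂, w₃, w₄, rfl⟩
    exact ⟨z₁ + w₁, z₂ + w₂, z₃ + w₃, z₄ + w₄, by simp only [map_add, mul_add]; abel⟩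
  neg_mem' := by
    rintro _ ⟨z₁, z₂, z₃, z₄, rfl⟩
    exact ⟨-z₁, -z₂, -z₃, -z₄, by simp only [map_neg, mul_neg]; abel⟩

theorem coe_hurwitz : (hurwitz : Set ℍ) = HurSet := by
  ext q
  constructor
  · rintro ⟨z₁, z₂, z₃, z₄, rfl⟩
    refine ⟨z₁.re, z₁.im, z₂.re, z₂.im, z₃.re, z₃.im, z₄.re, z₄.im, ?_⟩
    simp only [Gq_eq_gaussianToQuaternion]
  · rintro ⟨a₁, b₁, a₂, b₂, a₃, b₃, a₄, b₄, rfl⟩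
    exact ⟨⟨a₁, b₁⟩, ⟨a₂, b₂⟩, ⟨a₃, b₃⟩, ⟨a₄, b₄⟩, by simp only [Gq_eq_gaussianToQuaternion]⟩

namespace hurwitz

theorem rhoQ_mul_mem (z : GaussianInt) : rhoQ * φ z ∈ hurwitz := ⟨z, 0, 0, 0, by simp⟩

theorem rhoQ_mul_xiQ_mul_mem (z : GaussianInt) : rhoQ * xiQ * φ z ∈ hurwitz :=
  ⟨0, z, 0, 0, by simp⟩

theorem jj_mul_mem (z : GaussianInt) : jj * φ z ∈ hurwitz := ⟨0, 0, z, 0, by simp⟩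

theorem jj_mul_xiQ_mul_mem (z : GaussianInt) : jj * xiQ * φ z ∈ hurwitz :=
  ⟨0, 0, 0, z, by simp⟩

theorem mul_gaussianToQuaternion_mem {x : ℍ} (hx : x ∈ hurwitz) (z : GaussianInt) :
    x * φ z ∈ hurwitz := by
  obtain ⟨z₁, z₂, z₃, z₄, rfl⟩ := hx
  exact ⟨z₁ * z, z₂ * z, z₃ * z, z₄ * z, by simp only [map_mul, add_mul, mul_assoc]⟩

theorem mul_xiQ_mem {x : ℍ} (hx : x ∈ hurwitz) : x * xiQ ∈ hurwitz := by
  obtain ⟨z₁, z₂, z₃, z₄, rfl⟩ := hx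
  refine ⟨⟨0, 1⟩ * z₂, z₁, ⟨0, 1⟩ * z₄, z₃, ?_⟩
  simp only [add_mul, mul_assoc, ← (commute_xiQ _).eq, map_mul, ← xiQ_mul_self]
  abel

theorem mem_leftMulStabilizer {s : ℍ} (hρ : s * rhoQ ∈ hurwitz) (hj : s * jj ∈ hurwitz) :
    s ∈ hurwitz.leftMulStabilizer := by
  rintro _ ⟨z₁, z₂, z₃, z₄, rfl⟩
  simp only [mul_add, ← mul_assoc]
  refine add_mem (add_mem (add_mem ?_ ?_) ?_) ?_ <;>
    apply mul_gaussianToQuaternion_mem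
  exacts [hρ, mul_xiQ_mem hρ, hj, mul_xiQ_mem hj]

end hurwitz

section Identities

attribute [local simp] Quaternion.re_mul Quaternion.imI_mul Quaternion.imJ_mul Quaternion.imK_mul

theorem one_eq_rhoQ_mul_add_jj_mul : (1 : ℍ) = rhoQ * φ ⟨1, -1⟩ + jj * φ ⟨0, 1⟩ := by
  ext <;> simp <;> simp [gaussianToQuaternion_apply, rhoQ, jj] <;> norm_num

theorem rhoQ_mul_rhoQ : rhoQ * rhoQ = rhoQ - 1 := by
  ext <;> simp <;> simp [rhoQ] <;> norm_num

theorem rhoQ_mul_jj : rhoQ * jj = rhoQ * φ (-1) + jj * φ ⟨1, -1⟩ := by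
  ext <;> simp <;> simp [gaussianToQuaternion_apply, rhoQ, jj] <;> norm_num

theorem jj_mul_rhoQ : jj * rhoQ = rhoQ * φ ⟨0, 1⟩ := by
  ext <;> simp <;> simp [gaussianToQuaternion_apply, rhoQ, jj]

theorem jj_mul_jj : jj * jj = -1 := by
  ext <;> simp <;> simp [jj]

theorem xiQ_mul_rhoQ : xiQ * rhoQ = rhoQ * xiQ - jj * xiQ := by
  ext <;> simp <;> simp [xiQ_eq, rhoQ, jj] <;> ring

theorem xiQ_mul_jj : xiQ * jj = jj * xiQ * φ ⟨0, -1⟩ := by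
  ext <;> simp <;> simp [gaussianToQuaternion_apply, xiQ_eq, jj]

end Identities

namespace hurwitz

theorem one_mem : (1 : ℍ) ∈ hurwitz :=
  one_eq_rhoQ_mul_add_jj_mul ▸ add_mem (rhoQ_mul_mem _) (jj_mul_mem _)

theorem rhoQ_mem : rhoQ ∈ hurwitz := by simpa using rhoQ_mul_mem 1

theorem rhoQ_mem_leftMulStabilizer : rhoQ ∈ hurwitz.leftMulStabilizer :=
  mem_leftMulStabilizer (rhoQ_mul_rhoQ ▸ sub_mem rhoQ_mem one_mem)
    (rhoQ_mul_jj ▸ add_mem (rhoQ_mul_mem _) (jj_mul_mem _))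

theorem jj_mem_leftMulStabilizer : jj ∈ hurwitz.leftMulStabilizer :=
  mem_leftMulStabilizer (jj_mul_rhoQ ▸ rhoQ_mul_mem _) (jj_mul_jj ▸ neg_mem one_mem)

theorem xiQ_mem_leftMulStabilizer : xiQ ∈ hurwitz.leftMulStabilizer := by
  refine mem_leftMulStabilizer (xiQ_mul_rhoQ ▸ sub_mem ?_ ?_) (xiQ_mul_jj ▸ jj_mul_xiQ_mul_mem _)
  · simpa using rhoQ_mul_xiQ_mul_mem 1
  · simpa using jj_mul_xiQ_mul_mem 1

theorem subset_closure : (hurwitz : Set ℍ) ⊆ Subring.closure {rhoQ, jj, xiQ} := by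
  rintro _ ⟨z₁, z₂, z₃, z₄, rfl⟩
  have hφ (z : GaussianInt) : φ z ∈ Subring.closure {rhoQ, jj, xiQ} :=
    Subring.closure_mono (by simp) (gaussianToQuaternion_mem_closure_xiQ z)
  have hρ : rhoQ ∈ Subring.closure {rhoQ, jj, xiQ} := Subring.subset_closure (by simp)
  have hj : jj ∈ Subring.closure {rhoQ, jj, xiQ} := Subring.subset_closure (by simp)
  have hξ : xiQ ∈ Subring.closure {rhoQ, jj, xiQ} := Subring.subset_closure (by simp)
  exact add_mem (add_mem (add_mem (mul_mem hρ (hφ z₁)) (mul_mem (mul_mem hρ hξ) (hφ z₂)))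
    (mul_mem hj (hφ z₃))) (mul_mem (mul_mem hj hξ) (hφ z₄))

end hurwitz

/-- The Hurwitz-type ring `𝓗` is closed under multiplication: it forms a subring
of the quaternion algebra `H = ℚ(ξ) ⊕ jℚ(ξ)`. -/
theorem stmt2 : ∃ S : Subring (Quaternion ℝ), (S : Set (Quaternion ℝ)) = HurSet := by
  rw [← coe_hurwitz]
  refine hurwitz.exists_subring_coe_eq hurwitz.one_mem ?_ hurwitz.subset_closure
  simp only [Set.insert_subset_iff, Set.singleton_subset_iff]
  exact ⟨hurwitz.rhoQ_mem_leftMulStabilizer, hurwitz.jj_mem_leftMulStabilizer,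
    hurwitz.xiQ_mem_leftMulStabilizer⟩
end

section
/- Let M = M(c₁,c₂,c₃,c₄) be the 4×4 matrix with rows (c₁, ic₂, −c₃*, −c₄*), (c₂, c₁, ic₄*, −c₃*), (c₃, ic₄, c₁*, c₂*), (c₄, c₃, −ic₂*, c₁*), where c₁,…,c₄ ∈ ℤ[i] are not all zero. Then det(M M^H) is a positive integer, so in particular det(M M^H) ≥ 1. -/
/-!
`M Mᴴ` is block diagonal with two copies of the Hermitian block `[[N, (1+i)s], [(1-i)s, N]]`,
where `N = ∑ |cₜ|²` and `s` is an integer when the `cₜ` are Gaussian integers; hence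
`det (M Mᴴ) = (N² - 2s²)²`. Since `N ≥ 1` and `√2` is irrational, `N² - 2s²` is a nonzero
integer.
-/

open Complex Matrix

/-- `z` is a Gaussian integer. -/
def IsGaussian (z : ℂ) : Prop := ∃ a b : ℤ, z = a + b * Complex.I

/-- The quaternionic representation matrix `M(c₁,c₂,c₃,c₄)`. -/
noncomputable def Mmat (c : Fin 4 → ℂ) : Matrix (Fin 4) (Fin 4) ℂ :=
  !![c 0, Complex.I * c 1, -(starRingEnd ℂ (c 2)), -(starRingEnd ℂ (c 3));
     c 1, c 0, Complex.I * starRingEnd ℂ (c 3), -(starRingEnd ℂ (c 2));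
     c 2, Complex.I * c 3, starRingEnd ℂ (c 0), starRingEnd ℂ (c 1);
     c 3, c 2, -(Complex.I * starRingEnd ℂ (c 1)), starRingEnd ℂ (c 0)]

open ComplexConjugate GaussianInt

theorem Int.sq_ne_two_mul_sq {m n : ℤ} (hm : m ≠ 0) : m ^ 2 ≠ 2 * n ^ 2 := by
  intro h
  have hn : n ≠ 0 := by rintro rfl; simp_all
  have h2 : ¬IsSquare (2 : ℚ) := by norm_num
  refine h2 ⟨m / n, ?_⟩
  field_simp
  exact_mod_cast h.symm

theorem IsGaussian.exists_gaussianInt {z : ℂ} (hz : IsGaussian z) :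
    ∃ g : GaussianInt, (g : ℂ) = z := by
  obtain ⟨a, b, rfl⟩ := hz
  exact ⟨⟨a, b⟩, toComplex_def' a b⟩

noncomputable def sumNormSq (c : Fin 4 → ℂ) : ℝ := ∑ t, normSq (c t)

/-- With `w = c₀ c̄₁ + c₂ c̄₃`, the off-diagonal entry of `M Mᴴ` is
`w + i w̄ = (1 + i)(Re w + Im w)`. -/
noncomputable def crossTerm (c : Fin 4 → ℂ) : ℝ :=
  (c 0 * conj (c 1) + c 2 * conj (c 3)).re + (c 0 * conj (c 1) + c 2 * conj (c 3)).im

theorem sumNormSq_pos {c : Fin 4 → ℂ} (hc : c ≠ 0) : 0 < sumNormSq c := by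
  obtain ⟨t, ht⟩ := Function.ne_iff.mp hc
  exact Finset.sum_pos' (fun _ _ ↦ normSq_nonneg _) ⟨t, Finset.mem_univ _, normSq_pos.mpr ht⟩

theorem sumNormSq_toComplex (g : Fin 4 → GaussianInt) :
    sumNormSq (fun t ↦ g t) = ((∑ t, (g t).norm : ℤ) : ℝ) := by
  simp [sumNormSq, intCast_real_norm]

theorem crossTerm_toComplex (g : Fin 4 → GaussianInt) :
    crossTerm (fun t ↦ g t) =
      (((g 0 * star (g 1) + g 2 * star (g 3)).re + (g 0 * star (g 1) + g 2 * star (g 3)).im : ℤ) :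
        ℝ) := by
  simp only [crossTerm, ← toComplex_star, ← toComplex_mul, ← toComplex_add, Int.cast_add,
    GaussianInt.intCast_re, GaussianInt.intCast_im]

noncomputable def twistedBlockDiagonal (N s : ℂ) : Matrix (Fin 4) (Fin 4) ℂ :=
  !![N, (1 + I) * s, 0, 0;
     (1 - I) * s, N, 0, 0;
     0, 0, N, (1 + I) * s;
     0, 0, (1 - I) * s, N]

theorem det_twistedBlockDiagonal (N s : ℂ) :
    (twistedBlockDiagonal N s).det = (N ^ 2 - 2 * s ^ 2) ^ 2 := by
  simp [twistedBlockDiagonal, det_succ_row_zero, Fin.sum_univ_succ, Fin.succAbove]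
  linear_combination (2 * N ^ 2 * s ^ 2 + s ^ 4 * (I ^ 2 - 3)) * I_sq

theorem Mmat_mul_conjTranspose (c : Fin 4 → ℂ) :
    Mmat c * (Mmat c)ᴴ = twistedBlockDiagonal (sumNormSq c) (crossTerm c) := by
  ext i j
  fin_cases i <;> fin_cases j <;> refine Complex.ext ?_ ?_ <;>
    simp [Mmat, twistedBlockDiagonal, sumNormSq, crossTerm, mul_apply, Fin.sum_univ_four,
      normSq_apply] <;>
    ring

theorem det_Mmat_mul_conjTranspose (c : Fin 4 → ℂ) :
    (Mmat c * (Mmat c)ᴴ).det = ((sumNormSq c : ℂ) ^ 2 - 2 * (crossTerm c : ℂ) ^ 2) ^ 2 := by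
  rw [Mmat_mul_conjTranspose, det_twistedBlockDiagonal]

/-- For `c₁,…,c₄ ∈ ℤ[i]` not all zero, `det (M Mᴴ)` is a positive integer,
in particular at least 1. -/
theorem stmt6 (c : Fin 4 → ℂ) (hc : ∀ t, IsGaussian (c t)) (hne : c ≠ 0) :
    ∃ n : ℤ, 0 < n ∧ 1 ≤ n ∧ (Mmat c * (Mmat c)ᴴ).det = (n : ℂ) := by
  choose g hg using fun t ↦ (hc t).exists_gaussianInt
  obtain rfl : (fun t ↦ (g t : ℂ)) = c := funext hg
  have hN : 0 < ∑ t, (g t).norm := by exact_mod_cast sumNormSq_toComplex g ▸ sumNormSq_pos hne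
  set N := ∑ t, (g t).norm
  set s := (g 0 * star (g 1) + g 2 * star (g 3)).re + (g 0 * star (g 1) + g 2 * star (g 3)).im
  have hD : N ^ 2 - 2 * s ^ 2 ≠ 0 := sub_ne_zero.mpr (Int.sq_ne_two_mul_sq hN.ne')
  have hpos : 0 < (N ^ 2 - 2 * s ^ 2) ^ 2 := by positivity
  refine ⟨_, hpos, hpos, ?_⟩
  rw [det_Mmat_mul_conjTranspose, sumNormSq_toComplex, crossTerm_toComplex]
  norm_cast
end

section
/- With M = M(c₁,c₂,c₃,c₄) as in the quaternionic representation, write α = Σ_{t=1}^4 |cₜ|² and k = −i c₁c₂* + c₂c₁* − i c₃c₄* + c₄c₃*. Then M M^H is block diagonal with both diagonal 2×2 blocks equal to the matrix with diagonal entries α and off-diagonal entries k*, k, where k satisfies k* = i k; consequently det(M M^H) = (α² − |k|²)². -/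
/-!
Write `J = !![0, i; 1, 0]`, so that `M = [[A, -Bᴴ], [B, Aᴴ]]` in 2×2 blocks with `A = c₁ + c₂J` and
`B = c₃ + c₄J`. Since `J` is unitary, `A, Aᴴ, B, Bᴴ` all commute, so the off-diagonal blocks of `M Mᴴ`
vanish and both diagonal blocks equal `AAᴴ + BBᴴ = α + (c₂c₁* + c₄c₃*) J + (c₁c₂* + c₃c₄*) Jᴴ`.
-/

open Complex Matrix

/-- `α = Σ|cₜ|²`. -/
noncomputable def alphaOf (c : Fin 4 → ℂ) : ℝ := ∑ t, Complex.normSq (c t)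

/-- `k = −ic₁c₂* + c₂c₁* − ic₃c₄* + c₄c₃*`. -/
noncomputable def kOf (c : Fin 4 → ℂ) : ℂ :=
  -Complex.I * c 0 * starRingEnd ℂ (c 1) + c 1 * starRingEnd ℂ (c 0)
    - Complex.I * c 2 * starRingEnd ℂ (c 3) + c 3 * starRingEnd ℂ (c 2)

theorem Matrix.det_fin_four_blockDiagonal {R : Type*} [CommRing R] (a b c d e f g h : R) :
    !![a, b, 0, 0; c, d, 0, 0; 0, 0, e, f; 0, 0, g, h].det = (a * d - b * c) * (e * h - f * g) := by
  simp [det_succ_row_zero, Fin.sum_univ_succ, Fin.succAbove]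
  ring

theorem conj_kOf (c : Fin 4 → ℂ) : starRingEnd ℂ (kOf c) = Complex.I * kOf c := by
  simp only [kOf, map_add, map_sub, map_mul, map_neg, conj_conj, conj_I]
  linear_combination (c 0 * starRingEnd ℂ (c 1) + c 2 * starRingEnd ℂ (c 3)) * I_sq

theorem alphaOf_eq_sum_mul_conj (c : Fin 4 → ℂ) :
    (alphaOf c : ℂ) = ∑ t, c t * starRingEnd ℂ (c t) := by
  simp [alphaOf, mul_conj]

theorem Mmat_mul_conjTranspose_s7 (c : Fin 4 → ℂ) :
    Mmat c * (Mmat c)ᴴ =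
      !![(alphaOf c : ℂ), starRingEnd ℂ (kOf c), 0, 0;
         kOf c, (alphaOf c : ℂ), 0, 0;
         0, 0, (alphaOf c : ℂ), starRingEnd ℂ (kOf c);
         0, 0, kOf c, (alphaOf c : ℂ)] := by
  rw [conj_kOf, alphaOf_eq_sum_mul_conj]
  ext i j
  fin_cases i <;> fin_cases j <;>
    simp [Mmat, kOf, mul_apply, Fin.sum_univ_four] <;> ring_nf <;> simp [I_sq]

/-- `M Mᴴ` is block diagonal with both 2×2 blocks `[[α, k*],[k, α]]`, where
`k* = ik`; consequently `det (M Mᴴ) = (α² − |k|²)²`. -/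
theorem stmt7 (c : Fin 4 → ℂ) :
    starRingEnd ℂ (kOf c) = Complex.I * kOf c ∧
    Mmat c * (Mmat c)ᴴ =
      !![(alphaOf c : ℂ), starRingEnd ℂ (kOf c), 0, 0;
         kOf c, (alphaOf c : ℂ), 0, 0;
         0, 0, (alphaOf c : ℂ), starRingEnd ℂ (kOf c);
         0, 0, kOf c, (alphaOf c : ℂ)] ∧
    (Mmat c * (Mmat c)ᴴ).det = (((alphaOf c ^ 2 - ‖kOf c‖ ^ 2) ^ 2 : ℝ) : ℂ) := by
  refine ⟨conj_kOf c, Mmat_mul_conjTranspose_s7 c, ?_⟩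
  rw [Mmat_mul_conjTranspose_s7, det_fin_four_blockDiagonal, conj_mul']
  push_cast
  ring
end

section
/- The set 𝓘_𝓛 = {(c₁ + ξc₂) + j(c₃ + ξc₄) ∈ 𝓛 : c₁+c₂+c₃+c₄ ∈ (1+i)ℤ[i]} is a two-sided ideal of index two in the Lipschitz-type ring 𝓛 = ℤ[i] ⊕ ξℤ[i] ⊕ jℤ[i] ⊕ jξℤ[i]. -/
open Quaternion Complex

/-- `z` lies in the prime ideal `(1+i)ℤ[i]` of the Gaussian integers. -/
def InIdeal (z : ℂ) : Prop := ∃ a b : ℤ, z = (1 + Complex.I) * (a + b * Complex.I)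

/-- The Lipschitz-type ring `𝓛 = ℤ[i] ⊕ ξℤ[i] ⊕ jℤ[i] ⊕ jξℤ[i]`. -/
noncomputable def LipSet : Set (Quaternion ℝ) :=
  {q | ∃ a₁ b₁ a₂ b₂ a₃ b₃ a₄ b₄ : ℤ,
    q = Gq a₁ b₁ + xiQ * Gq a₂ b₂ + jj * Gq a₃ b₃ + jj * xiQ * Gq a₄ b₄}

/-- `𝓘_𝓛 = {(c₁ + ξc₂) + j(c₃ + ξc₄) ∈ 𝓛 : c₁+c₂+c₃+c₄ ∈ (1+i)ℤ[i]}`. -/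
noncomputable def IdealSet : Set (Quaternion ℝ) :=
  {q | ∃ a₁ b₁ a₂ b₂ a₃ b₃ a₄ b₄ : ℤ,
    q = Gq a₁ b₁ + xiQ * Gq a₂ b₂ + jj * Gq a₃ b₃ + jj * xiQ * Gq a₄ b₄ ∧
    InIdeal ((a₁ + b₁ * Complex.I) + (a₂ + b₂ * Complex.I) +
      (a₃ + b₃ * Complex.I) + (a₄ + b₄ * Complex.I))}

/-! An element `(c₁ + ξc₂) + j(c₃ + ξc₄)` of `𝓛` lies in `𝓘_𝓛` exactly when the sum of its eight
integer coordinates is even. Left and right multiplication by `ξ` and by `j` permutes the four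
Gaussian coordinates up to factors `±1`, `±i` and complex conjugation, none of which changes
parity; since `i = ξ²`, the ring generated by `ξ` and `j` contains `𝓛`, so `𝓘_𝓛` is a two-sided
ideal. The coordinates are unique because `√2` is irrational, hence `1 ∉ 𝓘_𝓛` and the index is two.
-/

theorem Irrational.eq_and_eq_of_intCast_add_mul_eq {x : ℝ} (hx : Irrational x) {p q p' q' : ℤ}
    (h : p + x * q = p' + x * q') : p = p' ∧ q = q' := by
  have hq : q = q' := by
    by_contra hne
    refine (hx.mul_intCast (sub_ne_zero.2 hne)).ne_int (p' - p) ?_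
    push_cast
    linear_combination h
  subst hq
  exact ⟨by exact_mod_cast add_right_cancel h, rfl⟩

def AddSubgroup.idealizer {R : Type*} [Ring R] (I : AddSubgroup R) : Subring R where
  carrier := {x | ∀ y ∈ I, x * y ∈ I ∧ y * x ∈ I}
  one_mem' y hy := by simp [hy]
  mul_mem' {x x'} hx hx' y hy :=
    ⟨mul_assoc x x' y ▸ (hx _ (hx' y hy).1).1, (mul_assoc y x x').symm ▸ (hx' _ (hx y hy).2).2⟩
  zero_mem' y hy := by simp
  add_mem' {x x'} hx hx' y hy := by
    simpa only [add_mul, mul_add] using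
      And.intro (I.add_mem (hx y hy).1 (hx' y hy).1) (I.add_mem (hx y hy).2 (hx' y hy).2)
  neg_mem' {x} hx y hy := by
    simpa only [neg_mul, mul_neg] using And.intro (I.neg_mem (hx y hy).1) (I.neg_mem (hx y hy).2)

lemma inIdeal_intCast_add_intCast_mul_I_iff (x y : ℤ) :
    InIdeal (x + y * Complex.I) ↔ Even (x + y) := by
  constructor
  · rintro ⟨a, b, h⟩
    have hre := congrArg Complex.re h
    have him := congrArg Complex.im h
    simp only [Complex.add_re, Complex.add_im, Complex.mul_re, Complex.mul_im, Complex.one_re,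
      Complex.one_im, Complex.I_re, Complex.I_im, Complex.intCast_re, Complex.intCast_im] at hre him
    norm_num at hre him
    exact ⟨a, by exact_mod_cast (by linarith : (x + y : ℝ) = a + a)⟩
  · rintro ⟨t, ht⟩
    refine ⟨t, y - t, ?_⟩
    rw [show x = t + t - y by omega]
    push_cast
    linear_combination ((t : ℂ) - y) * Complex.I_sq

local notation "s" => √2 / 2

lemma cexp_pi_mul_I_div_four :
    Complex.exp (Real.pi * Complex.I / 4) = (s : ℝ) + (s : ℝ) * Complex.I := by
  rw [show (Real.pi : ℂ) * Complex.I / 4 = ((Real.pi / 4 : ℝ) : ℂ) * Complex.I by push_cast; ring,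
    Complex.exp_mul_I, ← Complex.ofReal_cos, ← Complex.ofReal_sin, Real.cos_pi_div_four,
    Real.sin_pi_div_four]

@[simp] lemma re_xiQ : xiQ.re = s := by simp [xiQ, toQ, cexp_pi_mul_I_div_four]
@[simp] lemma imI_xiQ : xiQ.imI = s := by simp [xiQ, toQ, cexp_pi_mul_I_div_four]
@[simp] lemma imJ_xiQ : xiQ.imJ = 0 := rfl
@[simp] lemma imK_xiQ : xiQ.imK = 0 := rfl
@[simp] lemma re_jj : jj.re = 0 := rfl
@[simp] lemma imI_jj : jj.imI = 0 := rfl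
@[simp] lemma imJ_jj : jj.imJ = 1 := rfl
@[simp] lemma imK_jj : jj.imK = 0 := rfl
@[simp] lemma re_Gq (a b : ℤ) : (Gq a b).re = a := rfl
@[simp] lemma imI_Gq (a b : ℤ) : (Gq a b).imI = b := rfl
@[simp] lemma imJ_Gq (a b : ℤ) : (Gq a b).imJ = 0 := rfl
@[simp] lemma imK_Gq (a b : ℤ) : (Gq a b).imK = 0 := rfl

lemma Gq_eq_intCast_add_mul_xiQ_sq (a b : ℤ) : Gq a b = a + b * (xiQ * xiQ) := by
  ext <;> simp
  ring_nf; simp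

noncomputable def lipOfCoords (a₁ b₁ a₂ b₂ a₃ b₃ a₄ b₄ : ℤ) : ℍ[ℝ] :=
  Gq a₁ b₁ + xiQ * Gq a₂ b₂ + jj * Gq a₃ b₃ + jj * xiQ * Gq a₄ b₄

lemma inIdeal_sum_iff_even (a₁ b₁ a₂ b₂ a₃ b₃ a₄ b₄ : ℤ) :
    InIdeal ((a₁ + b₁ * Complex.I) + (a₂ + b₂ * Complex.I) + (a₃ + b₃ * Complex.I) +
      (a₄ + b₄ * Complex.I)) ↔ Even (a₁ + b₁ + a₂ + b₂ + a₃ + b₃ + a₄ + b₄) := by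
  have hsum : ((a₁ : ℂ) + b₁ * Complex.I) + (a₂ + b₂ * Complex.I) + (a₃ + b₃ * Complex.I) +
      (a₄ + b₄ * Complex.I) =
        ((a₁ + a₂ + a₃ + a₄ : ℤ) : ℂ) + ((b₁ + b₂ + b₃ + b₄ : ℤ) : ℂ) * Complex.I := by
    push_cast; ring
  rw [hsum, inIdeal_intCast_add_intCast_mul_I_iff]
  ring_nf

lemma mem_IdealSet_iff {q : ℍ[ℝ]} : q ∈ IdealSet ↔ ∃ a₁ b₁ a₂ b₂ a₃ b₃ a₄ b₄ : ℤ,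
    q = lipOfCoords a₁ b₁ a₂ b₂ a₃ b₃ a₄ b₄ ∧ Even (a₁ + b₁ + a₂ + b₂ + a₃ + b₃ + a₄ + b₄) := by
  simp only [IdealSet, Set.mem_ofPred_eq, inIdeal_sum_iff_even]
  rfl

lemma lipOfCoords_mem_IdealSet {a₁ b₁ a₂ b₂ a₃ b₃ a₄ b₄ : ℤ}
    (h : Even (a₁ + b₁ + a₂ + b₂ + a₃ + b₃ + a₄ + b₄)) :
    lipOfCoords a₁ b₁ a₂ b₂ a₃ b₃ a₄ b₄ ∈ IdealSet :=
  mem_IdealSet_iff.2 ⟨_, _, _, _, _, _, _, _, rfl, h⟩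

section
variable (a₁ b₁ a₂ b₂ a₃ b₃ a₄ b₄ : ℤ)

lemma re_lipOfCoords : (lipOfCoords a₁ b₁ a₂ b₂ a₃ b₃ a₄ b₄).re = a₁ + s * (a₂ - b₂ : ℤ) := by
  simp [lipOfCoords]; ring

lemma imI_lipOfCoords : (lipOfCoords a₁ b₁ a₂ b₂ a₃ b₃ a₄ b₄).imI = b₁ + s * (a₂ + b₂ : ℤ) := by
  simp [lipOfCoords]; ring

lemma imJ_lipOfCoords : (lipOfCoords a₁ b₁ a₂ b₂ a₃ b₃ a₄ b₄).imJ = a₃ + s * (a₄ - b₄ : ℤ) := by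
  simp [lipOfCoords]; ring

lemma imK_lipOfCoords :
    (lipOfCoords a₁ b₁ a₂ b₂ a₃ b₃ a₄ b₄).imK = -(b₃ + s * (a₄ + b₄ : ℤ)) := by
  simp [lipOfCoords]; ring

lemma lipOfCoords_add (c₁ d₁ c₂ d₂ c₃ d₃ c₄ d₄ : ℤ) :
    lipOfCoords a₁ b₁ a₂ b₂ a₃ b₃ a₄ b₄ + lipOfCoords c₁ d₁ c₂ d₂ c₃ d₃ c₄ d₄ =
      lipOfCoords (a₁ + c₁) (b₁ + d₁) (a₂ + c₂) (b₂ + d₂) (a₃ + c₃) (b₃ + d₃) (a₄ + c₄) (b₄ + d₄) := by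
  ext <;> simp [lipOfCoords] <;> ring

lemma neg_lipOfCoords : -lipOfCoords a₁ b₁ a₂ b₂ a₃ b₃ a₄ b₄ =
    lipOfCoords (-a₁) (-b₁) (-a₂) (-b₂) (-a₃) (-b₃) (-a₄) (-b₄) := by
  ext <;> simp [lipOfCoords] <;> ring

lemma lipOfCoords_zero : lipOfCoords 0 0 0 0 0 0 0 0 = 0 := by
  ext <;> simp [lipOfCoords]

lemma lipOfCoords_inj {c₁ d₁ c₂ d₂ c₃ d₃ c₄ d₄ : ℤ}
    (h : lipOfCoords a₁ b₁ a₂ b₂ a₃ b₃ a₄ b₄ = lipOfCoords c₁ d₁ c₂ d₂ c₃ d₃ c₄ d₄) :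
    a₁ = c₁ ∧ b₁ = d₁ ∧ a₂ = c₂ ∧ b₂ = d₂ ∧ a₃ = c₃ ∧ b₃ = d₃ ∧ a₄ = c₄ ∧ b₄ = d₄ := by
  have hs : Irrational s := irrational_sqrt_two.div_natCast two_ne_zero
  have h₁ := congrArg QuaternionAlgebra.re h
  have h₂ := congrArg QuaternionAlgebra.imI h
  have h₃ := congrArg QuaternionAlgebra.imJ h
  have h₄ := congrArg QuaternionAlgebra.imK h
  rw [re_lipOfCoords, re_lipOfCoords] at h₁
  rw [imI_lipOfCoords, imI_lipOfCoords] at h₂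
  rw [imJ_lipOfCoords, imJ_lipOfCoords] at h₃
  rw [imK_lipOfCoords, imK_lipOfCoords, neg_inj] at h₄
  obtain ⟨e₁, e₂⟩ := hs.eq_and_eq_of_intCast_add_mul_eq h₁
  obtain ⟨e₃, e₄⟩ := hs.eq_and_eq_of_intCast_add_mul_eq h₂
  obtain ⟨e₅, e₆⟩ := hs.eq_and_eq_of_intCast_add_mul_eq h₃
  obtain ⟨e₇, e₈⟩ := hs.eq_and_eq_of_intCast_add_mul_eq h₄
  omega

lemma lipOfCoords_mem_IdealSet_iff : lipOfCoords a₁ b₁ a₂ b₂ a₃ b₃ a₄ b₄ ∈ IdealSet ↔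
    Even (a₁ + b₁ + a₂ + b₂ + a₃ + b₃ + a₄ + b₄) := by
  refine ⟨fun h => ?_, lipOfCoords_mem_IdealSet⟩
  obtain ⟨c₁, d₁, c₂, d₂, c₃, d₃, c₄, d₄, hc, heven⟩ := mem_IdealSet_iff.1 h
  obtain ⟨rfl, rfl, rfl, rfl, rfl, rfl, rfl, rfl⟩ := lipOfCoords_inj _ _ _ _ _ _ _ _ hc
  exact heven

lemma xiQ_mul_lipOfCoords : xiQ * lipOfCoords a₁ b₁ a₂ b₂ a₃ b₃ a₄ b₄ =
    lipOfCoords (-b₂) a₂ a₁ b₁ a₄ b₄ b₃ (-a₃) := by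
  ext <;> simp [lipOfCoords] <;> ring_nf <;> simp only [Real.sq_sqrt zero_le_two] <;> ring

lemma lipOfCoords_mul_xiQ : lipOfCoords a₁ b₁ a₂ b₂ a₃ b₃ a₄ b₄ * xiQ =
    lipOfCoords (-b₂) a₂ a₁ b₁ (-b₄) a₄ a₃ b₃ := by
  ext <;> simp [lipOfCoords] <;> ring_nf <;> simp only [Real.sq_sqrt zero_le_two] <;> ring

lemma jj_mul_lipOfCoords : jj * lipOfCoords a₁ b₁ a₂ b₂ a₃ b₃ a₄ b₄ =
    lipOfCoords (-a₃) (-b₃) (-a₄) (-b₄) a₁ b₁ a₂ b₂ := by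
  ext <;> simp [lipOfCoords] <;> ring

lemma lipOfCoords_mul_jj : lipOfCoords a₁ b₁ a₂ b₂ a₃ b₃ a₄ b₄ * jj =
    lipOfCoords (-a₃) b₃ b₄ a₄ a₁ (-b₁) (-b₂) (-a₂) := by
  ext <;> simp [lipOfCoords] <;> ring

end

noncomputable def lipAddSubgroup : AddSubgroup ℍ[ℝ] where
  carrier := LipSet
  zero_mem' := ⟨0, 0, 0, 0, 0, 0, 0, 0, lipOfCoords_zero.symm⟩
  add_mem' := by
    rintro _ _ ⟨a₁, b₁, a₂, b₂, a₃, b₃, a₄, b₄, rfl⟩ ⟨c₁, d₁, c₂, d₂, c₃, d₃, c₄, d₄, rfl⟩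
    exact ⟨_, _, _, _, _, _, _, _, lipOfCoords_add ..⟩
  neg_mem' := by
    rintro _ ⟨a₁, b₁, a₂, b₂, a₃, b₃, a₄, b₄, rfl⟩
    exact ⟨_, _, _, _, _, _, _, _, neg_lipOfCoords ..⟩

noncomputable def idealAddSubgroup : AddSubgroup ℍ[ℝ] where
  carrier := IdealSet
  zero_mem' := lipOfCoords_zero ▸ lipOfCoords_mem_IdealSet Even.zero
  add_mem' {_ _} hq hq' := by
    obtain ⟨a₁, b₁, a₂, b₂, a₃, b₃, a₄, b₄, rfl, ha⟩ := mem_IdealSet_iff.1 hq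
    obtain ⟨c₁, d₁, c₂, d₂, c₃, d₃, c₄, d₄, rfl, hc⟩ := mem_IdealSet_iff.1 hq'
    rw [lipOfCoords_add]
    exact lipOfCoords_mem_IdealSet (by rw [Int.even_iff] at ha hc ⊢; omega)
  neg_mem' {_} hq := by
    obtain ⟨a₁, b₁, a₂, b₂, a₃, b₃, a₄, b₄, rfl, ha⟩ := mem_IdealSet_iff.1 hq
    rw [neg_lipOfCoords]
    exact lipOfCoords_mem_IdealSet (by rw [Int.even_iff] at ha ⊢; omega)

lemma idealAddSubgroup_le_lipAddSubgroup : idealAddSubgroup ≤ lipAddSubgroup := by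
  intro q hq
  obtain ⟨a₁, b₁, a₂, b₂, a₃, b₃, a₄, b₄, rfl, -⟩ := mem_IdealSet_iff.1 hq
  exact ⟨_, _, _, _, _, _, _, _, rfl⟩

lemma xiQ_mem_idealizer : xiQ ∈ idealAddSubgroup.idealizer := by
  intro y hy
  obtain ⟨a₁, b₁, a₂, b₂, a₃, b₃, a₄, b₄, rfl, ha⟩ := mem_IdealSet_iff.1 hy
  rw [xiQ_mul_lipOfCoords, lipOfCoords_mul_xiQ]
  rw [Int.even_iff] at ha
  exact ⟨lipOfCoords_mem_IdealSet (by rw [Int.even_iff]; omega),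
    lipOfCoords_mem_IdealSet (by rw [Int.even_iff]; omega)⟩

lemma jj_mem_idealizer : jj ∈ idealAddSubgroup.idealizer := by
  intro y hy
  obtain ⟨a₁, b₁, a₂, b₂, a₃, b₃, a₄, b₄, rfl, ha⟩ := mem_IdealSet_iff.1 hy
  rw [jj_mul_lipOfCoords, lipOfCoords_mul_jj]
  rw [Int.even_iff] at ha
  exact ⟨lipOfCoords_mem_IdealSet (by rw [Int.even_iff]; omega),
    lipOfCoords_mem_IdealSet (by rw [Int.even_iff]; omega)⟩

lemma LipSet_subset_closure_xiQ_jj : LipSet ⊆ Subring.closure {xiQ, jj} := by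
  have hξ : xiQ ∈ Subring.closure {xiQ, jj} := Subring.subset_closure (by simp)
  have hj : jj ∈ Subring.closure {xiQ, jj} := Subring.subset_closure (by simp)
  have hG (a b : ℤ) : Gq a b ∈ Subring.closure {xiQ, jj} := by
    rw [Gq_eq_intCast_add_mul_xiQ_sq]
    exact add_mem (intCast_mem _ a) (mul_mem (intCast_mem _ b) (mul_mem hξ hξ))
  rintro _ ⟨a₁, b₁, a₂, b₂, a₃, b₃, a₄, b₄, rfl⟩
  exact add_mem (add_mem (add_mem (hG _ _) (mul_mem hξ (hG _ _))) (mul_mem hj (hG _ _)))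
    (mul_mem (mul_mem hj hξ) (hG _ _))

lemma LipSet_subset_idealizer : LipSet ⊆ idealAddSubgroup.idealizer :=
  LipSet_subset_closure_xiQ_jj.trans <| Subring.closure_le.2 <|
    Set.insert_subset_iff.2 ⟨xiQ_mem_idealizer, Set.singleton_subset_iff.2 jj_mem_idealizer⟩

lemma index_idealAddSubgroup : (idealAddSubgroup.addSubgroupOf lipAddSubgroup).index = 2 := by
  rw [AddSubgroup.index_eq_two_iff]
  refine ⟨⟨lipOfCoords 1 0 0 0 0 0 0 0, ⟨_, _, _, _, _, _, _, _, rfl⟩⟩, ?_⟩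
  rintro ⟨_, ⟨a₁, b₁, a₂, b₂, a₃, b₃, a₄, b₄, rfl⟩⟩
  rw [xor_iff_iff_not]
  change lipOfCoords .. + lipOfCoords .. ∈ IdealSet ↔ lipOfCoords .. ∉ IdealSet
  rw [lipOfCoords_add, lipOfCoords_mem_IdealSet_iff, lipOfCoords_mem_IdealSet_iff,
    ← Int.even_add_one]
  ring_nf

/-- `𝓘_𝓛` is a two-sided ideal of index two in the Lipschitz-type ring `𝓛`. -/
theorem stmt8 : ∃ (LS IS : AddSubgroup (Quaternion ℝ)),
    (LS : Set (Quaternion ℝ)) = LipSet ∧ (IS : Set (Quaternion ℝ)) = IdealSet ∧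
    IS ≤ LS ∧
    (∀ x ∈ LipSet, ∀ y ∈ IdealSet, x * y ∈ IdealSet ∧ y * x ∈ IdealSet) ∧
    (IS.addSubgroupOf LS).index = 2 :=
  ⟨lipAddSubgroup, idealAddSubgroup, rfl, rfl, idealAddSubgroup_le_lipAddSubgroup,
    fun _ hx => LipSet_subset_idealizer hx, index_idealAddSubgroup⟩
end

section
/- For any nonzero matrix M = M(c₁,c₂,c₃,c₄) with c₁,…,c₄ ∈ ℤ[i] satisfying c₁+c₂+c₃+c₄ ∈ (1+i)ℤ[i], the determinant det(M M^H) is at least 4. -/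
open Complex Matrix ComplexOrder

/-!
For any complex `c`, `det M = α² - |k|²`. Since `|k| ≤ 2|c₁||c₂| + 2|c₃||c₄| ≤ α`, this is
nonnegative. For Gaussian integers, `k = (1 - i) κ` with `κ ∈ ℤ`, so `det M = α² - 2κ²` is an
integer, which vanishes only when `α = 0` because `√2` is irrational. The condition
`c₁ + c₂ + c₃ + c₄ ∈ (1 + i)ℤ[i]` forces `α ≡ Σ (Re cₜ + Im cₜ) ≡ 0 (mod 2)`, so `det M` is even.
Hence `det M ≥ 2` and `det (M Mᴴ) = (det M)² ≥ 4`.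
-/

open ComplexConjugate

noncomputable def quatNormSq (c : Fin 4 → ℂ) : ℝ := ∑ t, normSq (c t)

/-- The paper's `k = -i c₁c₂* + c₂c₁* - i c₃c₄* + c₄c₃*` (with `cₜ = c (t - 1)`), grouped as
`(w - i w*) + (w' - i w'*)` for `w = c₂c₁*`, `w' = c₄c₃*`. -/
noncomputable def quatK (c : Fin 4 → ℂ) : ℂ :=
  (c 1 * conj (c 0) - I * conj (c 1 * conj (c 0))) +
    (c 3 * conj (c 2) - I * conj (c 3 * conj (c 2)))

theorem det_Mmat (c : Fin 4 → ℂ) :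
    (Mmat c).det = ((quatNormSq c ^ 2 - normSq (quatK c) : ℝ) : ℂ) := by
  push_cast [quatNormSq, Fin.sum_univ_four]
  simp only [← mul_conj, quatK, map_add, map_sub, map_mul, conj_conj, conj_I]
  rw [Mmat, det_succ_row_zero, Fin.sum_univ_four]
  simp only [det_fin_three, submatrix_apply, of_apply, cons_val', cons_val_fin_one, cons_val_zero,
    cons_val_one, cons_val, Fin.succAbove, Fin.reduceSucc, Fin.reduceCastSucc, Fin.reduceLT,
    Fin.isValue, ↓reduceIte, Fin.coe_ofNat_eq_mod]
  ring_nf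
  simp only [I_sq]
  ring

theorem norm_sub_I_mul_conj_le (z : ℂ) : ‖z - I * conj z‖ ≤ 2 * ‖z‖ :=
  calc ‖z - I * conj z‖ ≤ ‖z‖ + ‖I * conj z‖ := norm_sub_le _ _
    _ = 2 * ‖z‖ := by rw [norm_mul, norm_I, RCLike.norm_conj]; ring

theorem normSq_quatK_le (c : Fin 4 → ℂ) : normSq (quatK c) ≤ quatNormSq c ^ 2 := by
  have hk : ‖quatK c‖ ≤ quatNormSq c :=
    calc ‖quatK c‖ ≤ 2 * ‖c 1 * conj (c 0)‖ + 2 * ‖c 3 * conj (c 2)‖ :=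
          (norm_add_le _ _).trans
            (add_le_add (norm_sub_I_mul_conj_le _) (norm_sub_I_mul_conj_le _))
      _ = 2 * ‖c 0‖ * ‖c 1‖ + 2 * ‖c 2‖ * ‖c 3‖ := by
          simp only [norm_mul, RCLike.norm_conj]; ring
      _ ≤ ‖c 0‖ ^ 2 + ‖c 1‖ ^ 2 + ‖c 2‖ ^ 2 + ‖c 3‖ ^ 2 := by
          linarith [two_mul_le_add_sq ‖c 0‖ ‖c 1‖, two_mul_le_add_sq ‖c 2‖ ‖c 3‖]
      _ = quatNormSq c := by simp [quatNormSq, Fin.sum_univ_four, normSq_eq_norm_sq]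
  rw [normSq_eq_norm_sq]
  exact pow_le_pow_left₀ (norm_nonneg _) hk 2

theorem normSq_one_sub_I_mul (z : ℂ) : normSq ((1 - I) * z) = 2 * normSq z := by
  rw [normSq_mul, normSq_apply]
  norm_num

theorem IsGaussian.exists_toComplex_eq {z : ℂ} (h : IsGaussian z) :
    ∃ w : GaussianInt, (w : ℂ) = z := by
  obtain ⟨a, b, rfl⟩ := h
  exact ⟨⟨a, b⟩, GaussianInt.toComplex_def' a b⟩

theorem GaussianInt.toComplex_sub_I_mul_conj (w : GaussianInt) :
    (w : ℂ) - I * conj (w : ℂ) = (1 - I) * ((w.re - w.im : ℤ) : ℂ) := by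
  rw [GaussianInt.toComplex_def, map_add, map_mul, conj_I, map_intCast, map_intCast]
  push_cast
  linear_combination (w.im : ℂ) * I_sq

theorem exists_quatK_eq (g : Fin 4 → GaussianInt) :
    ∃ κ : ℤ, quatK (fun t => g t) = (1 - I) * κ := by
  refine ⟨(g 1 * star (g 0)).re - (g 1 * star (g 0)).im +
    ((g 3 * star (g 2)).re - (g 3 * star (g 2)).im), ?_⟩
  have hmul (a b : GaussianInt) : (a : ℂ) * conj (b : ℂ) = ↑(a * star b) := by
    rw [GaussianInt.toComplex_mul, GaussianInt.toComplex_star]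
  simp only [quatK, hmul, GaussianInt.toComplex_sub_I_mul_conj]
  push_cast
  ring

theorem quatNormSq_toComplex (g : Fin 4 → GaussianInt) :
    quatNormSq (fun t => g t) = ((∑ t, (g t).norm : ℤ) : ℝ) := by
  simp [quatNormSq, GaussianInt.intCast_real_norm]

theorem exists_det_Mmat_toComplex_eq (g : Fin 4 → GaussianInt) :
    ∃ κ : ℤ, 2 * κ ^ 2 ≤ (∑ t, (g t).norm) ^ 2 ∧
      (Mmat (fun t => g t)).det = (((∑ t, (g t).norm) ^ 2 - 2 * κ ^ 2 : ℤ) : ℂ) := by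
  obtain ⟨κ, hκ⟩ := exists_quatK_eq g
  have hk := normSq_quatK_le (fun t => g t)
  rw [hκ, normSq_one_sub_I_mul, normSq_intCast, ← sq, quatNormSq_toComplex] at hk
  refine ⟨κ, by exact_mod_cast hk, ?_⟩
  rw [det_Mmat, quatNormSq_toComplex, hκ, normSq_one_sub_I_mul, normSq_intCast]
  push_cast
  ring

theorem GaussianInt.even_norm_add_re_add_im (z : GaussianInt) :
    Even (z.norm + z.re + z.im) := by
  have h : z.norm + z.re + z.im = z.re * (z.re + 1) + z.im * (z.im + 1) := by
    rw [Zsqrtd.norm_def]; ring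
  rw [h]
  exact (Int.even_mul_succ_self _).add (Int.even_mul_succ_self _)

theorem GaussianInt.even_re_add_im_of_inIdeal {z : GaussianInt} (h : InIdeal z) :
    Even (z.re + z.im) := by
  obtain ⟨a, b, hab⟩ := h
  obtain rfl : z = ⟨a - b, a + b⟩ := GaussianInt.toComplex_inj.1 <| by
    rw [hab, GaussianInt.toComplex_def']
    push_cast
    linear_combination (b : ℂ) * I_sq
  exact ⟨a, by ring⟩

theorem GaussianInt.even_sum_norm (g : Fin 4 → GaussianInt)
    (h : Even ((g 0 + g 1 + g 2 + g 3).re + (g 0 + g 1 + g 2 + g 3).im)) :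
    Even (∑ t, (g t).norm) := by
  have hsum : ∑ t, (g t).norm = ∑ t, ((g t).norm + (g t).re + (g t).im) -
      ((g 0 + g 1 + g 2 + g 3).re + (g 0 + g 1 + g 2 + g 3).im) := by
    simp only [Fin.sum_univ_four, Zsqrtd.re_add, Zsqrtd.im_add]; ring
  rw [hsum]
  exact (Finset.even_sum _ fun t _ => (g t).even_norm_add_re_add_im).sub h

theorem Int.eq_zero_of_sq_eq_two_mul_sq {m n : ℤ} (h : m ^ 2 = 2 * n ^ 2) : m = 0 := by
  obtain rfl | hn := eq_or_ne n 0
  · simpa using h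
  have h2 : ¬IsSquare (2 : ℚ) :=
    (irrational_sqrt_ratCast_iff_of_nonneg (by norm_num)).1 (by simpa using irrational_sqrt_two)
  exact absurd ⟨m / n, by field_simp; exact_mod_cast h.symm⟩ h2

theorem two_le_sq_sub_two_mul_sq {N κ : ℤ} (hle : 2 * κ ^ 2 ≤ N ^ 2) (hN : Even N)
    (hN0 : N ≠ 0) : 2 ≤ N ^ 2 - 2 * κ ^ 2 := by
  have hne : N ^ 2 - 2 * κ ^ 2 ≠ 0 := fun h =>
    hN0 (Int.eq_zero_of_sq_eq_two_mul_sq (n := κ) (by linarith))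
  obtain ⟨m, rfl⟩ := hN
  have h2 : (m + m) ^ 2 - 2 * κ ^ 2 = 2 * (2 * m ^ 2 - κ ^ 2) := by ring
  have hnonneg : 0 ≤ 2 * (2 * m ^ 2 - κ ^ 2) := h2 ▸ sub_nonneg.2 hle
  rw [h2] at hne ⊢
  omega

theorem Mmat_zero : Mmat 0 = 0 := by
  ext i j
  fin_cases i <;> fin_cases j <;> simp [Mmat]

/-- For a nonzero `M = M(c₁,c₂,c₃,c₄)` with Gaussian-integer coefficients
satisfying `c₁+c₂+c₃+c₄ ∈ (1+i)ℤ[i]`, one has `det (M Mᴴ) ≥ 4`. -/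
theorem stmt9 (c : Fin 4 → ℂ) (hc : ∀ t, IsGaussian (c t))
    (hsum : InIdeal (c 0 + c 1 + c 2 + c 3)) (hne : Mmat c ≠ 0) :
    (4 : ℂ) ≤ (Mmat c * (Mmat c)ᴴ).det := by
  choose g hg using fun t => (hc t).exists_toComplex_eq
  obtain rfl : c = fun t => (g t : ℂ) := funext fun t => (hg t).symm
  obtain ⟨κ, hle, hdet⟩ := exists_det_Mmat_toComplex_eq g
  have hN : Even (∑ t, (g t).norm) :=
    GaussianInt.even_sum_norm g (GaussianInt.even_re_add_im_of_inIdeal (by simpa using hsum))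
  have hN0 : ∑ t, (g t).norm ≠ 0 := by
    intro h0
    have hg0 : ∀ t, g t = 0 := fun t => GaussianInt.norm_eq_zero.1 <|
      (Finset.sum_eq_zero_iff_of_nonneg fun t _ => GaussianInt.norm_nonneg (g t)).1 h0 t
        (Finset.mem_univ t)
    have hc0 : (fun t => (g t : ℂ)) = 0 := funext fun t => by simp [hg0]
    exact hne (hc0 ▸ Mmat_zero)
  have h2 := two_le_sq_sub_two_mul_sq hle hN hN0
  rw [det_mul, det_conjTranspose, hdet, star_intCast]
  exact_mod_cast (by nlinarith : (4 : ℤ) ≤ _ * _)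
end

section
/- Let A and B be commuting n×n complex matrices such that A, B, A^H, B^H all commute, let h ∈ ℂ^{2n} be a row vector, and define M(A,B) as the 2n×2n block matrix with blocks [[A, B], [−B^H, A^H]]. Then the vectors hM(A,0) and hM(0,B) in ℂ^{2n}, viewed as vectors in ℝ^{4n}, are orthogonal with respect to the real inner product (i.e. the real part of the Hermitian inner product of hM(A,0) and hM(0,B) is zero). -/
open Matrix

/-!
The real inner product of `h M₁` and `h M₂` is `Re ((h M₁ M₂ᴴ) ⬝ᵥ h̄)`, the real part of the
sesquilinear form of `M₁ M₂ᴴ` at `h`. For `M₁ = M(A,0)`, `M₂ = M(0,B)` this product is the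
off-diagonal block matrix `[[0, -AB], [AᴴBᴴ, 0]]`, which is skew-Hermitian as soon as `A` and `B`
commute; the form of a skew-Hermitian matrix takes purely imaginary values.
-/

namespace Matrix

section StarRing

variable {m n R : Type*} [Fintype m] [Fintype n] [NonUnitalSemiring R] [StarRing R]

theorem vecMul_dotProduct_star_vecMul (h : m → R) (M N : Matrix m n R) :
    (h ᵥ* M) ⬝ᵥ star (h ᵥ* N) = (h ᵥ* (M * Nᴴ)) ⬝ᵥ star h := by
  rw [star_vecMul, dotProduct_mulVec, vecMul_vecMul]

theorem star_vecMul_dotProduct_star (h : m → R) (K : Matrix m m R) :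
    star ((h ᵥ* K) ⬝ᵥ star h) = (h ᵥ* Kᴴ) ⬝ᵥ star h := by
  rw [← star_dotProduct_star, star_star, star_vecMul, dotProduct_mulVec]

end StarRing

theorem re_vecMul_dotProduct_star_eq_zero {m 𝕜 : Type*} [Fintype m] [RCLike 𝕜]
    {K : Matrix m m 𝕜} (hK : K ∈ skewAdjoint (Matrix m m 𝕜)) (h : m → 𝕜) :
    RCLike.re ((h ᵥ* K) ⬝ᵥ star h) = 0 := by
  have hstar := star_vecMul_dotProduct_star h K
  rw [← star_eq_conjTranspose, skewAdjoint.mem_iff.mp hK, vecMul_neg, neg_dotProduct] at hstar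
  have hre := congrArg RCLike.re hstar
  rw [RCLike.star_def, RCLike.conj_re, map_neg] at hre
  linarith

theorem fromBlocks_mul_conjTranspose_fromBlocks_mem_skewAdjoint {n α : Type*} [Fintype n]
    [CommRing α] [StarRing α] {A B : Matrix n n α} (hAB : A * B = B * A) :
    fromBlocks A 0 0 Aᴴ * (fromBlocks 0 B (-Bᴴ) 0)ᴴ ∈ skewAdjoint (Matrix (n ⊕ n) (n ⊕ n) α) := by
  rw [skewAdjoint.mem_iff, star_eq_conjTranspose]
  simp [fromBlocks_multiply, fromBlocks_conjTranspose, fromBlocks_neg, hAB]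

end Matrix

theorem stmt16_general (n : ℕ) (A B : Matrix (Fin n) (Fin n) ℂ)
    (h1 : A * B = B * A)
    (h : Fin n ⊕ Fin n → ℂ) :
    ((h ᵥ* Matrix.fromBlocks A 0 (-(0 : Matrix (Fin n) (Fin n) ℂ)ᴴ) Aᴴ) ⬝ᵥ
      star (h ᵥ* Matrix.fromBlocks 0 B (-Bᴴ) 0)).re = 0 := by
  rw [conjTranspose_zero, neg_zero, vecMul_dotProduct_star_vecMul]
  exact re_vecMul_dotProduct_star_eq_zero
    (fromBlocks_mul_conjTranspose_fromBlocks_mem_skewAdjoint h1) h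

/-- If `A, B, Aᴴ, Bᴴ` all commute pairwise and `h ∈ ℂ^{2n}`, then the vectors
`h·M(A,0)` and `h·M(0,B)` (with `M(A,B) = [[A, B],[−Bᴴ, Aᴴ]]`) are orthogonal
for the real inner product on `ℂ^{2n} ≅ ℝ^{4n}`. -/
theorem stmt16 (n : ℕ) (A B : Matrix (Fin n) (Fin n) ℂ)
    (h1 : A * B = B * A) (h2 : A * Aᴴ = Aᴴ * A) (h3 : A * Bᴴ = Bᴴ * A)
    (h4 : B * Aᴴ = Aᴴ * B) (h5 : B * Bᴴ = Bᴴ * B) (h6 : Aᴴ * Bᴴ = Bᴴ * Aᴴ)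
    (h : Fin n ⊕ Fin n → ℂ) :
    ((h ᵥ* Matrix.fromBlocks A 0 (-(0 : Matrix (Fin n) (Fin n) ℂ)ᴴ) Aᴴ) ⬝ᵥ
      star (h ᵥ* Matrix.fromBlocks 0 B (-Bᴴ) 0)).re = 0 :=
  stmt16_general n A B h1 h
end
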